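/- arXiv:2410.08497 — 2 statements merged into one kernel-verified Lean document; each statement's English description precedes it below -/
import Mathlib

section
/- If a differentiable function Φ : ℝ^d → ℝ satisfies the Polyak–Łojasiewicz condition with parameter μ > 0 and attains its minimum at x*, then for all x, μ‖x − x*‖ ≤ ‖∇Φ(x)‖ whenever x* is the projection of x onto the solution set; in particular, for a strongly quadratically-growing function (which PL implies), μ·dist(x, argmin Φ) ≤ ‖∇Φ(x)‖. -/
/-!
By PL, `g = √(Φ - Φ*)` has slope at least `√(2μ)/2` wherever `g > 0`. For `c` below that slope,
Ekeland's principle (in a proper space: take a minimiser `y` of `g + c · dist(·, x)`) gives a point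
`y` with `c · dist(x, y) ≤ g x` at which `g` has slope at most `c`; hence `g y = 0`. Letting `c`
increase yields the quadratic growth `√(2μ)/2 · dist(x, X*) ≤ √(Φ x - Φ*)`, and PL at `x` turns
this into `μ · dist(x, X*) ≤ ‖∇Φ x‖`.
-/

open Filter Metric Set Topology

theorem Continuous.exists_ekeland_point {X : Type*} [PseudoMetricSpace X] [ProperSpace X]
    {f : X → ℝ} (hf : Continuous f) (hbdd : BddBelow (range f)) {c : ℝ} (hc : 0 < c) (x₀ : X) :
    ∃ y, f y + c * dist y x₀ ≤ f x₀ ∧ ∀ z, f y ≤ f z + c * dist z y := by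
  obtain ⟨m, hm⟩ := hbdd
  have hcoercive : Tendsto (fun z => f z + c * dist z x₀) (cocompact X) atTop :=
    tendsto_atTop_add_left_of_le _ m (fun z => hm ⟨z, rfl⟩)
      ((tendsto_dist_right_cocompact_atTop x₀).const_mul_atTop hc)
  have : Nonempty X := ⟨x₀⟩
  obtain ⟨y, hy⟩ :=
    (hf.add (continuous_const.mul (continuous_id.dist continuous_const))).exists_forall_le hcoercive
  refine ⟨y, by simpa using hy x₀, fun z => ?_⟩
  have hyz : f y + c * dist y x₀ ≤ f z + c * dist z x₀ := hy z
  nlinarith [dist_triangle z y x₀]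

theorem HasFDerivAt.norm_le_of_eventually_le_add_mul_norm {E : Type*} [NormedAddCommGroup E]
    [NormedSpace ℝ E] {g : E → ℝ} {D : E →L[ℝ] ℝ} {y : E} (hD : HasFDerivAt g D y) {c : ℝ}
    (hc : 0 ≤ c) (hmin : ∀ᶠ z in 𝓝 y, g y ≤ g z + c * ‖z - y‖) : ‖D‖ ≤ c := by
  have hdir : ∀ v, -(c * ‖v‖) ≤ D v := by
    intro v
    have hline : HasDerivAt (fun t : ℝ => y + t • v) v 0 := by
      simpa using ((hasDerivAt_id (0 : ℝ)).smul_const v).const_add y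
    set φ : ℝ → ℝ := fun t => g (y + t • v) + t * (c * ‖v‖)
    have hφ : HasDerivAt φ (D v + c * ‖v‖) 0 := by
      have hD' : HasFDerivAt g D (y + (0 : ℝ) • v) := by simpa using hD
      exact (hD'.comp_hasDerivAt 0 hline).add (hasDerivAt_mul_const (c * ‖v‖))
    have hφmin : IsLocalMinOn φ (Ici 0) 0 := by
      have hy : Tendsto (fun t : ℝ => y + t • v) (𝓝 0) (𝓝 y) := by
        simpa using hline.continuousAt.tendsto
      filter_upwards [nhdsWithin_le_nhds (hy.eventually hmin), self_mem_nhdsWithin]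
        with t ht (ht0 : 0 ≤ t)
      simp only [φ, zero_smul, add_zero, add_sub_cancel_left, norm_smul,
        Real.norm_of_nonneg ht0] at ht ⊢
      linarith
    have := hφmin.hasFDerivWithinAt_nonneg hφ.hasFDerivAt.hasFDerivWithinAt (y := 1)
      (mem_posTangentConeAt_of_segment_subset (by simp [segment_eq_Icc, Icc_subset_Ici_self]))
    simp only [ContinuousLinearMap.toSpanSingleton_apply, smul_eq_mul, one_mul] at this
    linarith
  refine ContinuousLinearMap.opNorm_le_bound _ hc fun v => abs_le.2 ⟨by linarith [hdir v], ?_⟩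
  simpa using hdir (-v)

theorem mul_infDist_zero_le_of_le_norm_fderiv {E : Type*} [NormedAddCommGroup E] [NormedSpace ℝ E]
    [ProperSpace E] {g : E → ℝ} (hg : Continuous g) (hg0 : ∀ x, 0 ≤ g x) {κ : ℝ}
    (hslope : ∀ y, 0 < g y → ∃ D : E →L[ℝ] ℝ, HasFDerivAt g D y ∧ κ ≤ ‖D‖) (x : E) :
    κ * infDist x {y | g y = 0} ≤ g x := by
  rcases le_or_gt κ 0 with hκ | hκ
  · nlinarith [infDist_nonneg (x := x) (s := {y | g y = 0}), hg0 x]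
  have hbelow : ∀ c ∈ Ioo 0 κ, c * infDist x {y | g y = 0} ≤ g x := by
    rintro c ⟨hc0, hcκ⟩
    obtain ⟨y, hyx, hymin⟩ := hg.exists_ekeland_point ⟨0, by rintro _ ⟨z, rfl⟩; exact hg0 z⟩ hc0 x
    have hy : g y = 0 := by
      by_contra hne
      obtain ⟨D, hD, hκD⟩ := hslope y ((hg0 y).lt_of_ne' hne)
      have := hD.norm_le_of_eventually_le_add_mul_norm hc0.le
        (Eventually.of_forall fun z => by simpa [dist_eq_norm] using hymin z)
      linarith
    calc c * infDist x {y | g y = 0} ≤ c * dist y x := by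
          gcongr
          rw [dist_comm]
          exact infDist_le_dist_of_mem hy
      _ ≤ g x := by linarith
  refine le_of_tendsto (x := 𝓝[<] κ)
    ((continuous_mul_const _).tendsto κ |>.mono_left nhdsWithin_le_nhds) ?_
  filter_upwards [Ioo_mem_nhdsLT hκ] using hbelow

theorem mul_infDist_le_norm_fderiv_of_pl {E : Type*} [NormedAddCommGroup E] [NormedSpace ℝ E]
    [ProperSpace E] {f : E → ℝ} {m μ : ℝ} (hμ : 0 < μ) (hf : Differentiable ℝ f)
    (hPL : ∀ x, f x - m ≤ 1 / (2 * μ) * ‖fderiv ℝ f x‖ ^ 2) (x : E) :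
    μ * infDist x {y | f y ≤ m} ≤ ‖fderiv ℝ f x‖ := by
  have hroot : ∀ x, √(2 * μ) * √(f x - m) ≤ ‖fderiv ℝ f x‖ := by
    intro x
    rw [← Real.sqrt_mul (by positivity), ← Real.sqrt_sq (norm_nonneg (fderiv ℝ f x))]
    apply Real.sqrt_le_sqrt
    have := hPL x
    rw [div_mul_eq_mul_div, one_mul, le_div_iff₀ (by positivity)] at this
    linarith
  have hslope : ∀ y, 0 < √(f y - m) →
      ∃ D : E →L[ℝ] ℝ, HasFDerivAt (fun z => √(f z - m)) D y ∧ √(2 * μ) / 2 ≤ ‖D‖ := by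
    intro y hy
    refine ⟨_, ((hf y).hasFDerivAt.sub_const m).sqrt (Real.sqrt_pos.1 hy).ne', ?_⟩
    rw [norm_smul, Real.norm_of_nonneg (by positivity), one_div, ← div_eq_inv_mul,
      le_div_iff₀ (by positivity)]
    linarith [hroot y]
  have hgrowth : √(2 * μ) / 2 * infDist x {y | √(f y - m) = 0} ≤ √(f x - m) :=
    mul_infDist_zero_le_of_le_norm_fderiv
      (hf.continuous.sub continuous_const).sqrt (fun _ => Real.sqrt_nonneg _) hslope x
  simp only [Real.sqrt_eq_zero', sub_nonpos] at hgrowth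
  calc μ * infDist x {y | f y ≤ m} = √(2 * μ) * (√(2 * μ) / 2 * infDist x {y | f y ≤ m}) := by
        rw [← mul_assoc, ← mul_div_assoc, Real.mul_self_sqrt (by positivity)]
        ring
    _ ≤ √(2 * μ) * √(f x - m) := by gcongr
    _ ≤ ‖fderiv ℝ f x‖ := hroot x

/-- The PL condition with parameter `μ` implies the error-bound property:
`μ · dist(x, argmin Φ) ≤ ‖∇Φ(x)‖`. -/
theorem pl_implies_error_bound
    {d : ℕ} (Φ : EuclideanSpace ℝ (Fin d) → ℝ) (μ : ℝ) (hμ : 0 < μ)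
    (hdiff : Differentiable ℝ Φ)
    (xstar : EuclideanSpace ℝ (Fin d)) (hmin : ∀ x, Φ xstar ≤ Φ x)
    (hPL : ∀ x, Φ x - Φ xstar ≤ 1 / (2 * μ) * ‖gradient Φ x‖ ^ 2) :
    ∀ x, μ * Metric.infDist x {y | ∀ z, Φ y ≤ Φ z} ≤ ‖gradient Φ x‖ := by
  have hnorm : ∀ z, ‖gradient Φ z‖ = ‖fderiv ℝ Φ z‖ := fun z =>
    (InnerProductSpace.toDual ℝ _).symm.norm_map _
  have hargmin : {y | ∀ z, Φ y ≤ Φ z} = {y | Φ y ≤ Φ xstar} :=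
    ext fun y => ⟨fun hy => hy xstar, fun hy z => hy.trans (hmin z)⟩
  intro x
  rw [hargmin, hnorm]
  exact mul_infDist_le_norm_fderiv_of_pl hμ hdiff (fun z => hnorm z ▸ hPL z) x
end

section
/- Let F : X × Y → ℝ where Y ⊆ ℝ^m is nonempty closed convex, F(x,·) is μ-strongly concave and differentiable for each x, and the gradient of F is β-Lipschitz jointly in (x,y). Define y*(x) = argmax_{y∈Y} F(x,y). Then y*(·) is (β/μ)-Lipschitz: ‖y*(x₁) − y*(x₂)‖ ≤ (β/μ)‖x₁ − x₂‖ for all x₁, x₂ ∈ X. -/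
/-!
Adding the quadratic-growth inequalities of the strongly concave functions `F x₁` and `F x₂` at
their maximizers `u = y*(x₁)`, `v = y*(x₂)` gives `μ ‖u - v‖² ≤ G u - G v` for
`G = F x₁ - F x₂`. The `y`-block of the gradient bound says `‖∇G‖ ≤ β ‖x₁ - x₂‖`, so by the mean
value inequality `G u - G v ≤ β ‖x₁ - x₂‖ ‖u - v‖`; dividing by `μ ‖u - v‖` gives the claim.
-/

open Set
open scoped NNReal

section StrongConcavity

variable {E : Type*} [NormedAddCommGroup E] [NormedSpace ℝ E] {s : Set E} {μ : ℝ} {f g : E → ℝ}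
  {u v : E}

lemma StrongConcaveOn.add_sq_norm_sub_le_of_isMaxOn (hf : StrongConcaveOn s μ f) (hu : u ∈ s)
    (hv : v ∈ s) (hmax : IsMaxOn f s u) : f v + μ / 2 * ‖v - u‖ ^ 2 ≤ f u := by
  set c := μ / 2 * ‖v - u‖ ^ 2 with hc
  -- Compare the strong concavity inequality on `[u, v]` with maximality, divide by `t`,
  -- and let `t → 0`.
  have hsegment : Ioc (0 : ℝ) 1 ⊆ {t | f v + (1 - t) * c ≤ f u} := by
    rintro t ⟨ht0, ht1⟩
    have hconc := hf.2 hv hu ht0.le (sub_nonneg.2 ht1) (add_sub_cancel t 1)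
    have hle : f (t • v + (1 - t) • u) ≤ f u :=
      hmax (hf.1 hv hu ht0.le (sub_nonneg.2 ht1) (add_sub_cancel t 1))
    simp only [smul_eq_mul, ← hc] at hconc
    have hscaled : t * (f v + (1 - t) * c - f u) ≤ t * 0 := by linarith
    exact sub_nonpos.1 (le_of_mul_le_mul_left hscaled ht0)
  have hclosed : IsClosed {t : ℝ | f v + (1 - t) * c ≤ f u} :=
    isClosed_le (by fun_prop) continuous_const
  have hzero : (0 : ℝ) ∈ closure (Ioc 0 1) := by simp [closure_Ioc zero_ne_one]
  simpa using hclosed.closure_subset_iff.2 hsegment hzero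

lemma StrongConcaveOn.norm_sub_le_of_isMaxOn_of_lipschitzOnWith_sub {L : ℝ≥0}
    (hf : StrongConcaveOn s μ f) (hg : StrongConcaveOn s μ g) (hμ : 0 < μ) (hu : u ∈ s)
    (hv : v ∈ s) (hfu : IsMaxOn f s u) (hgv : IsMaxOn g s v) (hfg : LipschitzOnWith L (f - g) s) :
    ‖u - v‖ ≤ L / μ := by
  have hgrowth : μ * ‖u - v‖ ^ 2 ≤ (f - g) u - (f - g) v := by
    have hfv := hf.add_sq_norm_sub_le_of_isMaxOn hu hv hfu
    have hgu := hg.add_sq_norm_sub_le_of_isMaxOn hv hu hgv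
    rw [norm_sub_rev] at hfv
    simp only [Pi.sub_apply]
    linarith
  have hlip : (f - g) u - (f - g) v ≤ L * ‖u - v‖ := by
    simpa [Real.dist_eq, dist_eq_norm] using (le_abs_self _).trans (hfg.dist_le_mul u hu v hv)
  rw [le_div_iff₀ hμ]
  rcases (norm_nonneg (u - v)).eq_or_lt with hr | hr
  · rw [← hr, zero_mul]
    exact L.2
  · nlinarith

end StrongConcavity

lemma lipschitzWith_sub_of_norm_gradient_sub_le {F : Type*} [NormedAddCommGroup F]
    [InnerProductSpace ℝ F] [CompleteSpace F] {f g : F → ℝ} (hf : Differentiable ℝ f)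
    (hg : Differentiable ℝ g) {C : ℝ≥0} (hC : ∀ y, ‖gradient f y - gradient g y‖ ≤ C) :
    LipschitzWith C (f - g) := by
  refine lipschitzWith_of_nnnorm_fderiv_le (hf.sub hg) fun y => ?_
  rw [← NNReal.coe_le_coe, coe_nnnorm, fderiv_sub (hf y) (hg y), ← toDual_gradient,
    ← toDual_gradient, ← map_sub, LinearIsometryEquiv.norm_map]
  exact hC y

theorem maximizer_map_lipschitz_general
    {d m : ℕ}
    (Y : Set (EuclideanSpace ℝ (Fin m)))
    (F : EuclideanSpace ℝ (Fin d) → EuclideanSpace ℝ (Fin m) → ℝ)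
    (μ β : ℝ) (hμ : 0 < μ)
    (hdiff : Differentiable ℝ (fun p : EuclideanSpace ℝ (Fin d) × EuclideanSpace ℝ (Fin m) =>
      F p.1 p.2))
    (hconc : ∀ x, StrongConcaveOn Y μ (F x))
    (hsmooth : ∀ x₁ y₁ x₂ y₂,
      Real.sqrt (‖gradient (fun x => F x y₁) x₁ - gradient (fun x => F x y₂) x₂‖ ^ 2 +
          ‖gradient (F x₁) y₁ - gradient (F x₂) y₂‖ ^ 2) ≤
        β * Real.sqrt (‖x₁ - x₂‖ ^ 2 + ‖y₁ - y₂‖ ^ 2))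
    (ystar : EuclideanSpace ℝ (Fin d) → EuclideanSpace ℝ (Fin m))
    (hmem : ∀ x, ystar x ∈ Y)
    (hmax : ∀ x, IsMaxOn (F x) Y (ystar x)) :
    ∀ x₁ x₂, ‖ystar x₁ - ystar x₂‖ ≤ β / μ * ‖x₁ - x₂‖ := by
  intro x₁ x₂
  have hslice : ∀ x, Differentiable ℝ (F x) := fun x =>
    hdiff.comp ((differentiable_const x).prodMk differentiable_id)
  have hgrad : ∀ y, ‖gradient (F x₁) y - gradient (F x₂) y‖ ≤ β * ‖x₁ - x₂‖ := fun y => by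
    have h := hsmooth x₁ y x₂ y
    rw [sub_self, norm_zero, zero_pow two_ne_zero, add_zero, Real.sqrt_sq (norm_nonneg _)] at h
    exact (Real.le_sqrt_of_sq_le (le_add_of_nonneg_left (sq_nonneg _))).trans h
  let L : ℝ≥0 := ⟨β * ‖x₁ - x₂‖, (norm_nonneg _).trans (hgrad 0)⟩
  have hlip : LipschitzWith L (F x₁ - F x₂) :=
    lipschitzWith_sub_of_norm_gradient_sub_le (hslice x₁) (hslice x₂) hgrad
  have hdist := (hconc x₁).norm_sub_le_of_isMaxOn_of_lipschitzOnWith_sub (hconc x₂) hμ (hmem x₁)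
    (hmem x₂) (hmax x₁) (hmax x₂) hlip.lipschitzOnWith
  rw [div_mul_eq_mul_div]
  exact hdist

/-- If `F(x, ·)` is `μ`-strongly concave on a nonempty closed convex set `Y` and the
gradient of `F` is `β`-Lipschitz jointly in `(x, y)` (blockwise Euclidean formulation),
then the maximizer map `y*(·)` is `(β/μ)`-Lipschitz. -/
theorem maximizer_map_lipschitz
    {d m : ℕ}
    (Y : Set (EuclideanSpace ℝ (Fin m))) (hYne : Y.Nonempty) (hYcl : IsClosed Y)
    (hYconv : Convex ℝ Y)
    (F : EuclideanSpace ℝ (Fin d) → EuclideanSpace ℝ (Fin m) → ℝ)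
    (μ β : ℝ) (hμ : 0 < μ) (hβ : 0 < β)
    (hdiff : Differentiable ℝ (fun p : EuclideanSpace ℝ (Fin d) × EuclideanSpace ℝ (Fin m) =>
      F p.1 p.2))
    (hconc : ∀ x, StrongConcaveOn Y μ (F x))
    (hsmooth : ∀ x₁ y₁ x₂ y₂,
      Real.sqrt (‖gradient (fun x => F x y₁) x₁ - gradient (fun x => F x y₂) x₂‖ ^ 2 +
          ‖gradient (F x₁) y₁ - gradient (F x₂) y₂‖ ^ 2) ≤
        β * Real.sqrt (‖x₁ - x₂‖ ^ 2 + ‖y₁ - y₂‖ ^ 2))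
    (ystar : EuclideanSpace ℝ (Fin d) → EuclideanSpace ℝ (Fin m))
    (hmem : ∀ x, ystar x ∈ Y)
    (hmax : ∀ x, IsMaxOn (F x) Y (ystar x)) :
    ∀ x₁ x₂, ‖ystar x₁ - ystar x₂‖ ≤ β / μ * ‖x₁ - x₂‖ :=
  maximizer_map_lipschitz_general Y F μ β hμ hdiff hconc hsmooth ystar hmem hmax
end
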